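/- arXiv:1709.09760 — 2 statements merged into one kernel-verified Lean document; each statement's English description precedes it below -/
import Mathlib

section
/- For every nonzero x ∈ F^4 and every matrix M ∈ G, π[x·M] = {v·M : v ∈ π[x]}; that is, π([x]·M) = π([x])·M. Consequently, every M ∈ G induces an automorphism of the graph A(q). -/
/-
The four spanning vectors of `π[x]` are the rows of a matrix `P(x)`, so `π[x]` is its row space.
In characteristic 2 the form `c(x) = x₀x₁ + x₂x₃` transforms under `M = M(r;a,b)` as
`c(xM) = c(x) r^(ω+2) + x₀² (a^(ω+2) + b^ω) + x₂² a^ω r²`, and because `q = 2^(2n+1)` the field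
automorphisms `u ↦ u^ω` and `u ↦ u^(ω/2)` satisfy `(u^ω)^(ω/2) = u` and `(u^ω)^ω = u²`. Hence
every entry of `P(xM)` is an explicit polynomial in those of `P(x)`, in `r, a, b` and in their
`ω`-th powers, and one checks `D P(x) M = T P(xM)` for an invertible diagonal `D` and an
invertible `T` depending only on `r, a, b`. Equal row spaces give `π[xM] = π[x] M`. Since
`P(t x) = t^ω P(x)`, the polar line only depends on the point `[x]`, so the projective action of
`M` preserves adjacency in `A(q)`.
-/

open Matrix

noncomputable section

abbrev F (n : ℕ) : Type := GaloisField 2 (2 * n + 1)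

def om (n : ℕ) : ℕ := 2 ^ (n + 1)

def ff (n : ℕ) (x y : F n) : F n := x ^ (om n + 2) + x * y + y ^ om n

def Mmat (n : ℕ) (r a b : F n) : Matrix (Fin 4) (Fin 4) (F n) :=
  !![1, ff n a b, a, b;
     0, r ^ (om n + 2), 0, 0;
     0, (a ^ (om n + 1) + b) * r, r, a ^ om n * r;
     0, a * r ^ (om n + 1), 0, r ^ (om n + 1)]

/-- The four spanning vectors of the polar line `π[x]`. -/
def polarGens (n : ℕ) (x : Fin 4 → F n) : Set (Fin 4 → F n) :=
  {![0, (x 0 * x 1 + x 2 * x 3) ^ 2 ^ n, x 0 ^ om n, x 2 ^ om n],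
   ![(x 0 * x 1 + x 2 * x 3) ^ 2 ^ n, 0, x 3 ^ om n, x 1 ^ om n],
   ![x 0 ^ om n, x 3 ^ om n, 0, (x 0 * x 1 + x 2 * x 3) ^ 2 ^ n],
   ![x 2 ^ om n, x 1 ^ om n, (x 0 * x 1 + x 2 * x 3) ^ 2 ^ n, 0]}

/-- The polar line `π[x]`, as a subspace of `F⁴`. -/
def polarSpan (n : ℕ) (x : Fin 4 → F n) : Submodule (F n) (Fin 4 → F n) :=
  Submodule.span (F n) (polarGens n x)

/-- The point set of `PG(3,q)`. -/
abbrev PG3 (n : ℕ) : Type := Projectivization (F n) (Fin 4 → F n)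

/-- The graph `A(q)`: projective points of `PG(3,q)`, with `[x]` adjacent to `[y]`
iff `[x] ≠ [y]` and `y ∈ π[x]` (equivalently, `x ∈ π[y]`, the relation being
symmetric).  Membership `y ∈ π[x]` does not depend on the choice of
representatives, so it is tested on the canonical representatives. -/
def Aq (n : ℕ) : SimpleGraph (PG3 n) where
  Adj P Q := P ≠ Q ∧ Q.rep ∈ polarSpan n P.rep ∧ P.rep ∈ polarSpan n Q.rep
  symm := ⟨fun _ _ h => ⟨h.1.symm, h.2.2, h.2.1⟩⟩
  loopless := ⟨fun _ h => h.1 rfl⟩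

/-- A vector with a coordinate equal to `1` is nonzero. -/
lemma vne {n : ℕ} (v : Fin 4 → F n) (i : Fin 4) (h : v i = 1) : v ≠ 0 := by
  intro h0; rw [h0] at h; simp at h

section Frobenius

variable {n : ℕ}

lemma sq_pow_two_pow {M : Type*} [Monoid M] (u : M) : (u ^ 2) ^ 2 ^ n = u ^ om n := by
  rw [← pow_mul, om, pow_succ']

lemma add_pow_om {R : Type*} [CommSemiring R] [CharP R 2] (u v : R) :
    (u + v) ^ om n = u ^ om n + v ^ om n :=
  add_pow_char_pow u v 2 (n + 1)

variable {K : Type*} [Field K] [Finite K] (hK : Nat.card K = 2 ^ (2 * n + 1))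
include hK

lemma pow_card_eq_self (u : K) : u ^ 2 ^ (2 * n + 1) = u := by
  have := Fintype.ofFinite K
  rw [← hK, Nat.card_eq_fintype_card]
  exact FiniteField.pow_card u

lemma pow_om_pow_two_pow (u : K) : (u ^ om n) ^ 2 ^ n = u := by
  rw [← pow_mul, om, ← pow_add, show n + 1 + n = 2 * n + 1 by omega, pow_card_eq_self hK]

lemma pow_om_pow_om (u : K) : (u ^ om n) ^ om n = u ^ 2 := by
  rw [← pow_mul, om, ← pow_add, show n + 1 + (n + 1) = 2 * n + 1 + 1 by omega, pow_succ,
    pow_mul, pow_card_eq_self hK]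

end Frobenius

lemma natCard_F (n : ℕ) : Nat.card (F n) = 2 ^ (2 * n + 1) :=
  GaloisField.card 2 (2 * n + 1) (by omega)

lemma Matrix.vecMulLinear_mul {l m n R : Type*} [CommSemiring R] [Fintype l] [Fintype m]
    (A : Matrix l m R) (B : Matrix m n R) :
    (A * B).vecMulLinear = B.vecMulLinear ∘ₗ A.vecMulLinear :=
  LinearMap.ext fun v => (vecMul_vecMul v A B).symm

lemma Matrix.range_vecMulLinear_mul_of_isUnit {m n R : Type*} [CommRing R] [Fintype m]
    [DecidableEq m] {A : Matrix m m R} (hA : IsUnit A) (B : Matrix m n R) :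
    LinearMap.range (A * B).vecMulLinear = LinearMap.range B.vecMulLinear := by
  rw [vecMulLinear_mul, LinearMap.range_comp_of_range_eq_top]
  exact LinearMap.range_eq_top.mpr (vecMul_surjective_iff_isUnit.mpr hA)

theorem Projectivization.rep_smul_mem_iff {K V : Type*} [Field K] [AddCommGroup V] [Module K V]
    {S : V → Submodule K V} (hS : ∀ (t : Kˣ) (v : V), S (t • v) = S v) (e : V ≃ₗ[K] V)
    (he : ∀ v, S (e v) = (S v).map (e : V →ₗ[K] V)) (P Q : Projectivization K V) :
    (e • Q).rep ∈ S (e • P).rep ↔ Q.rep ∈ S P.rep := by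
  have hrep (P : Projectivization K V) : ∃ c : Kˣ, c • e P.rep = (e • P).rep := by
    obtain ⟨c, hc⟩ := exists_smul_eq_mk_rep K (e • P.rep)
      ((smul_ne_zero_iff_ne e).mpr P.rep_nonzero)
    rw [← smul_mk e P.rep_nonzero, mk_rep] at hc
    exact ⟨c, hc⟩
  obtain ⟨c, hc⟩ := hrep P
  obtain ⟨d, hd⟩ := hrep Q
  rw [← hc, ← hd, hS, he, Submodule.smul_mem_iff', Submodule.mem_map_equiv,
    LinearEquiv.symm_apply_apply]

def quadForm {R : Type*} [CommRing R] (x : Fin 4 → R) : R := x 0 * x 1 + x 2 * x 3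

lemma quadForm_smul {R : Type*} [CommRing R] (t : R) (x : Fin 4 → R) :
    quadForm (t • x) = t ^ 2 * quadForm x := by
  simp only [quadForm, Pi.smul_apply, smul_eq_mul]
  ring

def polarMatrix (n : ℕ) (x : Fin 4 → F n) : Matrix (Fin 4) (Fin 4) (F n) :=
  !![0, quadForm x ^ 2 ^ n, x 0 ^ om n, x 2 ^ om n;
     quadForm x ^ 2 ^ n, 0, x 3 ^ om n, x 1 ^ om n;
     x 0 ^ om n, x 3 ^ om n, 0, quadForm x ^ 2 ^ n;
     x 2 ^ om n, x 1 ^ om n, quadForm x ^ 2 ^ n, 0]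

lemma polarGens_eq_range_row (n : ℕ) (x : Fin 4 → F n) :
    polarGens n x = Set.range (polarMatrix n x).row := by
  show _ = Set.range ![_, _, _, _]
  simp only [Matrix.range_cons, Matrix.range_empty, Set.union_empty, Set.singleton_union]
  rfl

lemma polarSpan_eq_range (n : ℕ) (x : Fin 4 → F n) :
    polarSpan n x = LinearMap.range (polarMatrix n x).vecMulLinear := by
  rw [polarSpan, polarGens_eq_range_row, range_vecMulLinear]

lemma polarMatrix_smul {n : ℕ} (t : F n) (x : Fin 4 → F n) :
    polarMatrix n (t • x) = t ^ om n • polarMatrix n x := by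
  ext i j
  fin_cases i <;> fin_cases j <;>
    simp [polarMatrix, quadForm_smul, mul_pow, sq_pow_two_pow]

lemma polarSpan_smul {n : ℕ} {t : F n} (ht : t ≠ 0) (x : Fin 4 → F n) :
    polarSpan n (t • x) = polarSpan n x := by
  have hdiag : IsUnit (diagonal fun _ : Fin 4 => t ^ om n) :=
    isUnit_diagonal.mpr (Pi.isUnit_iff.mpr fun _ => (pow_ne_zero _ ht).isUnit)
  rw [polarSpan_eq_range, polarSpan_eq_range, polarMatrix_smul, smul_eq_diagonal_mul,
    range_vecMulLinear_mul_of_isUnit hdiag]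

section Mmat

variable {n : ℕ} (r a b : F n) (x : Fin 4 → F n)

lemma vecMul_Mmat_zero : (x ᵥ* Mmat n r a b) 0 = x 0 := by
  simp [Mmat, vecMul, dotProduct, Fin.sum_univ_four]

lemma vecMul_Mmat_one : (x ᵥ* Mmat n r a b) 1 =
    x 0 * ff n a b + x 1 * r ^ (om n + 2) + x 2 * ((a ^ (om n + 1) + b) * r)
      + x 3 * (a * r ^ (om n + 1)) := by
  simp [Mmat, vecMul, dotProduct, Fin.sum_univ_four]

lemma vecMul_Mmat_two : (x ᵥ* Mmat n r a b) 2 = x 0 * a + x 2 * r := by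
  simp [Mmat, vecMul, dotProduct, Fin.sum_univ_four]

lemma vecMul_Mmat_three : (x ᵥ* Mmat n r a b) 3 =
    x 0 * b + x 2 * (a ^ om n * r) + x 3 * r ^ (om n + 1) := by
  simp [Mmat, vecMul, dotProduct, Fin.sum_univ_four]

lemma quadForm_vecMul_Mmat :
    quadForm (x ᵥ* Mmat n r a b) = quadForm x * r ^ (om n + 2)
      + x 0 ^ 2 * (a ^ (om n + 2) + b ^ om n) + x 2 ^ 2 * (a ^ om n * r ^ 2) := by
  -- `reduce_mod_char` finds the characteristic of `GaloisField` only through a local instance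
  have : CharP (F n) 2 := inferInstance
  simp only [quadForm, vecMul_Mmat_zero, vecMul_Mmat_one, vecMul_Mmat_two, vecMul_Mmat_three, ff]
  ring_nf
  reduce_mod_char!

lemma quadForm_vecMul_Mmat_pow_two_pow :
    quadForm (x ᵥ* Mmat n r a b) ^ 2 ^ n = r * r ^ om n * quadForm x ^ 2 ^ n
      + x 0 ^ om n * (a * a ^ om n + b) + x 2 ^ om n * (a * r ^ om n) := by
  rw [quadForm_vecMul_Mmat]
  simp only [add_pow_char_pow, mul_pow, pow_add, sq_pow_two_pow, pow_om_pow_two_pow (natCard_F n)]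
  ring

lemma vecMul_Mmat_one_pow_om : (x ᵥ* Mmat n r a b) 1 ^ om n =
    x 0 ^ om n * (a ^ 2 * (a ^ om n) ^ 2 + a ^ om n * b ^ om n + b ^ 2)
      + x 1 ^ om n * (r ^ 2 * (r ^ om n) ^ 2)
      + x 2 ^ om n * ((a ^ 2 * a ^ om n + b ^ om n) * r ^ om n)
      + x 3 ^ om n * (a ^ om n * r ^ 2 * r ^ om n) := by
  rw [vecMul_Mmat_one, ff]
  simp only [add_pow_om, mul_pow, pow_add, pow_om_pow_om (natCard_F n), pow_one]
  ring

lemma vecMul_Mmat_two_pow_om : (x ᵥ* Mmat n r a b) 2 ^ om n =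
    x 0 ^ om n * a ^ om n + x 2 ^ om n * r ^ om n := by
  rw [vecMul_Mmat_two, add_pow_om, mul_pow, mul_pow]

lemma vecMul_Mmat_three_pow_om : (x ᵥ* Mmat n r a b) 3 ^ om n =
    x 0 ^ om n * b ^ om n + x 2 ^ om n * (a ^ 2 * r ^ om n)
      + x 3 ^ om n * (r ^ 2 * r ^ om n) := by
  rw [vecMul_Mmat_three]
  simp only [add_pow_om, mul_pow, pow_add, pow_om_pow_om (natCard_F n), pow_one]

def polarTransform : Matrix (Fin 4) (Fin 4) (F n) :=
  !![r, 0, 0, 0;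
     ff n a b, 1, b, a;
     a, 0, 1, 0;
     a ^ om n * a + b, 0, a ^ om n, 1]

lemma diagonal_mul_polarMatrix_mul_Mmat :
    diagonal ![1, r ^ om n * r, 1, r ^ om n] * (polarMatrix n x * Mmat n r a b) =
      polarTransform r a b * polarMatrix n (x ᵥ* Mmat n r a b) := by
  have : CharP (F n) 2 := inferInstance
  rw [polarMatrix, polarMatrix, quadForm_vecMul_Mmat_pow_two_pow, vecMul_Mmat_zero,
    vecMul_Mmat_one_pow_om, vecMul_Mmat_two_pow_om, vecMul_Mmat_three_pow_om]
  ext i j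
  fin_cases i <;> fin_cases j <;>
    simp [Matrix.mul_apply, Fin.sum_univ_four, polarTransform, Mmat, ff] <;>
    ring_nf <;> reduce_mod_char!

variable {r}

lemma isUnit_polarTransform (hr : r ≠ 0) : IsUnit (polarTransform r a b) := by
  rw [Matrix.isUnit_iff_isUnit_det, isUnit_iff_ne_zero]
  simpa [Matrix.det_succ_row_zero, Fin.sum_univ_succ, polarTransform] using hr

lemma isUnit_Mmat (hr : r ≠ 0) : IsUnit (Mmat n r a b) := by
  rw [Matrix.isUnit_iff_isUnit_det, isUnit_iff_ne_zero]
  simp [Matrix.det_succ_row_zero, Fin.sum_univ_succ, Mmat, hr]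

lemma polarSpan_vecMul_Mmat (hr : r ≠ 0) :
    polarSpan n (x ᵥ* Mmat n r a b) =
      Submodule.map (Mmat n r a b).vecMulLinear (polarSpan n x) := by
  have hdiag : IsUnit (diagonal ![1, r ^ om n * r, 1, r ^ om n]) := by
    rw [Matrix.isUnit_diagonal, Pi.isUnit_iff]
    intro i
    fin_cases i <;> simp [hr]
  rw [polarSpan_eq_range, polarSpan_eq_range,
    ← range_vecMulLinear_mul_of_isUnit (isUnit_polarTransform a b hr),
    ← diagonal_mul_polarMatrix_mul_Mmat, range_vecMulLinear_mul_of_isUnit hdiag,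
    vecMulLinear_mul, LinearMap.range_comp]

def vecMulMmatEquiv (hr : r ≠ 0) : (Fin 4 → F n) ≃ₗ[F n] (Fin 4 → F n) :=
  LinearEquiv.ofInjectiveEndo (Mmat n r a b).vecMulLinear
    (vecMul_injective_of_isUnit (isUnit_Mmat a b hr))

end Mmat

theorem G_preserves_polarity_and_induces_automorphisms_general (n : ℕ) :
    (∀ r : F n, r ≠ 0 → ∀ a b : F n, ∀ x : Fin 4 → F n, x ≠ 0 →
      polarSpan n (x ᵥ* Mmat n r a b) =
        Submodule.map (Mmat n r a b).vecMulLinear (polarSpan n x)) ∧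
    (∀ r : F n, r ≠ 0 → ∀ a b : F n, ∃ φ : Aq n ≃g Aq n,
      ∀ (x : Fin 4 → F n) (hx : x ≠ 0) (hx' : x ᵥ* Mmat n r a b ≠ 0),
        φ (Projectivization.mk (F n) x hx) =
          Projectivization.mk (F n) (x ᵥ* Mmat n r a b) hx') := by
  refine ⟨fun r hr a b x _ => polarSpan_vecMul_Mmat a b x hr, fun r hr a b => ?_⟩
  let e := vecMulMmatEquiv a b hr
  have hpolar := Projectivization.rep_smul_mem_iff (S := polarSpan n)
    (fun t v => polarSpan_smul t.ne_zero v) e (fun v => polarSpan_vecMul_Mmat a b v hr)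
  refine ⟨⟨MulAction.toPerm e, fun {P Q} => ?_⟩, fun x hx _ => Projectivization.smul_mk e hx⟩
  exact and_congr (smul_left_cancel_iff e).not (and_congr (hpolar P Q) (hpolar Q P))

theorem G_preserves_polarity_and_induces_automorphisms (n : ℕ) (hn : 1 ≤ n) :
    (∀ r : F n, r ≠ 0 → ∀ a b : F n, ∀ x : Fin 4 → F n, x ≠ 0 →
      polarSpan n (x ᵥ* Mmat n r a b) =
        Submodule.map (Mmat n r a b).vecMulLinear (polarSpan n x)) ∧
    (∀ r : F n, r ≠ 0 → ∀ a b : F n, ∃ φ : Aq n ≃g Aq n,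
      ∀ (x : Fin 4 → F n) (hx : x ≠ 0) (hx' : x ᵥ* Mmat n r a b ≠ 0),
        φ (Projectivization.mk (F n) x hx) =
          Projectivization.mk (F n) (x ᵥ* Mmat n r a b) hx') :=
  G_preserves_polarity_and_induces_automorphisms_general n
end
end

section
/- The stabilisers in G of the projective points [0,1,1,0] and [1,1,0,1] coincide and equal H2 = {M(r; 0, 1 + r^(ω+1)) : r ∈ F^*}; the map r ↦ M(r; 0, 1 + r^(ω+1)) is a group isomorphism from F^* onto H2 (in particular M(r;0,1+r^(ω+1))·M(s;0,1+s^(ω+1)) = M(rs; 0, 1+(rs)^(ω+1)) for all r, s ∈ F^*); and H2 acts regularly on each of the sets {[1,1,0,z+1] : z ∈ F^*} and {[1,z+1,z,1] : z ∈ F^*}, where in particular [1,z+1,z,1]·M(r;0,1+r^(ω+1)) = [1, zr+1, zr, 1] for all z, r ∈ F^*. -/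
/-! Write `R = r ^ (ω + 1)`. Since `ω ^ 2 = 2q`, we have `x ^ (ω ^ 2) = x ^ 2` on `F`, so
`(1 + R) ^ ω = 1 + r ^ (ω + 2)` and `M(r; 0, 1 + R)` is an explicit sparse matrix. Comparing
coordinates of `v · M(r; a, b)` with a multiple of `v` forces `a = 0` and `b = 1 + R` for both
points. The explicit matrix maps `[1, 1, 0, z + 1]` to `[1, 1, 0, zR + 1]` and `[1, z + 1, z, 1]`
to `[1, zr + 1, zr, 1]`; regularity on the first set holds because `(ω + 1)(ω - 1) = ω ^ 2 - 1`,
so `x ↦ x ^ (ω - 1)` inverts `x ↦ x ^ (ω + 1)` on `F^*`. -/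

open Matrix

noncomputable section

/-- The stabiliser in `G` of the projective point `[v]`:
elements of `G` mapping `v` to a nonzero scalar multiple of itself. -/
def stab (n : ℕ) (v : Fin 4 → F n) : Set (Matrix (Fin 4) (Fin 4) (F n)) :=
  {A | (∃ r a b : F n, r ≠ 0 ∧ A = Mmat n r a b) ∧ ∃ t : F n, t ≠ 0 ∧ v ᵥ* A = t • v}

section PowerMaps

variable {M : Type*} [GroupWithZero M] {ω : ℕ}

theorem pow_succ_mul_pred_eq_self (hω : ∀ x : M, x ^ (ω ^ 2) = x ^ 2) {x : M} (hx : x ≠ 0) :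
    x ^ ((ω + 1) * (ω - 1)) = x := by
  have hω0 : ω ≠ 0 := by
    rintro rfl
    simpa using hω 0
  have hexp : (ω + 1) * (ω - 1) + 1 = ω ^ 2 := by
    obtain ⟨k, rfl⟩ := Nat.exists_eq_add_one_of_ne_zero hω0
    rw [Nat.add_sub_cancel]
    ring
  refine mul_right_cancel₀ hx ?_
  rw [← pow_succ, hexp, hω, sq]

theorem existsUnique_pow_succ_eq (hω : ∀ x : M, x ^ (ω ^ 2) = x ^ 2) {c : M} (hc : c ≠ 0) :
    ∃! r : M, r ≠ 0 ∧ r ^ (ω + 1) = c := by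
  refine ⟨c ^ (ω - 1), ⟨pow_ne_zero _ hc, ?_⟩, ?_⟩
  · rw [← pow_mul, mul_comm, pow_succ_mul_pred_eq_self hω hc]
  · rintro r ⟨hr, rfl⟩
    rw [← pow_mul, pow_succ_mul_pred_eq_self hω hr]

end PowerMaps

theorem exists_smul_eq_iff_eq_of_apply_eq_one {ι R : Type*} [Semiring R] [Nontrivial R]
    {v w : ι → R} (i : ι) (hv : v i = 1) (hw : w i = 1) : (∃ t : R, t ≠ 0 ∧ v = t • w) ↔ v = w := by
  refine ⟨fun ⟨t, _, h⟩ => ?_, fun h => ⟨1, one_ne_zero, by rw [h, one_smul]⟩⟩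
  have ht : t = 1 := by simpa [hv, hw] using (congrFun h i).symm
  rw [h, ht, one_smul]

namespace F

theorem pow_card (n : ℕ) (x : F n) : x ^ 2 ^ (2 * n + 1) = x := by
  have : Fintype (F n) := Fintype.ofFinite _
  have hq : Fintype.card (F n) = 2 ^ (2 * n + 1) := by
    rw [← Nat.card_eq_fintype_card, GaloisField.card 2 _ (by omega)]
  exact hq ▸ FiniteField.pow_card x

theorem pow_om_sq (n : ℕ) (x : F n) : x ^ om n ^ 2 = x ^ 2 := by
  have h : om n ^ 2 = 2 ^ (2 * n + 1) * 2 := by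
    rw [om, ← pow_mul, ← pow_succ]
    ring_nf
  rw [h, pow_mul, pow_card]

end F

theorem om_ne_zero (n : ℕ) : om n ≠ 0 := pow_ne_zero _ two_ne_zero

theorem ff_zero_one_add (n : ℕ) (r : F n) : ff n 0 (1 + r ^ (om n + 1)) = 1 + r ^ (om n + 2) := by
  have hfrob : (1 + r ^ (om n + 1)) ^ om n = 1 + (r ^ (om n + 1)) ^ om n := by
    rw [om, add_pow_char_pow, one_pow]
  have hpow : (r ^ (om n + 1)) ^ om n = r ^ (om n + 2) := by
    rw [← pow_mul, add_mul, one_mul, ← sq, pow_add, F.pow_om_sq, ← pow_add, add_comm (om n)]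
  rw [ff, zero_pow (Nat.succ_ne_zero _), zero_mul, zero_add, zero_add, hfrob, hpow]

theorem Mmat_zero_one_add (n : ℕ) (r : F n) :
    Mmat n r 0 (1 + r ^ (om n + 1)) =
      !![1, 1 + r ^ (om n + 2), 0, 1 + r ^ (om n + 1);
         0, r ^ (om n + 2), 0, 0;
         0, (1 + r ^ (om n + 1)) * r, r, 0;
         0, 0, 0, r ^ (om n + 1)] := by
  rw [Mmat, ff_zero_one_add]
  simp [zero_pow (om_ne_zero n)]

theorem vecMul_Mmat (n : ℕ) (v : Fin 4 → F n) (r a b : F n) :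
    v ᵥ* Mmat n r a b =
      ![v 0,
        v 0 * ff n a b + v 1 * r ^ (om n + 2) + v 2 * ((a ^ (om n + 1) + b) * r) +
          v 3 * (a * r ^ (om n + 1)),
        v 0 * a + v 2 * r,
        v 0 * b + v 2 * (a ^ om n * r) + v 3 * r ^ (om n + 1)] := by
  ext i
  fin_cases i <;> simp [Mmat, vecMul, dotProduct, Fin.sum_univ_four]

theorem Mmat_mul_Mmat (n : ℕ) (r s : F n) :
    Mmat n r 0 (1 + r ^ (om n + 1)) * Mmat n s 0 (1 + s ^ (om n + 1)) =
      Mmat n (r * s) 0 (1 + (r * s) ^ (om n + 1)) := by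
  rw [Mmat_zero_one_add, Mmat_zero_one_add, Mmat_zero_one_add, mul_pow]
  ext i j
  fin_cases i <;> fin_cases j <;> simp [mul_apply, Fin.sum_univ_four] <;>
    ring_nf <;> simp [CharTwo.two_eq_zero]

theorem vecMul_Mmat_one_add (n : ℕ) (z r : F n) :
    ![1, z + 1, z, 1] ᵥ* Mmat n r 0 (1 + r ^ (om n + 1)) = ![1, z * r + 1, z * r, 1] := by
  rw [Mmat_zero_one_add]
  ext i
  fin_cases i <;> simp [vecMul, dotProduct, Fin.sum_univ_four] <;>
    ring_nf <;> simp [CharTwo.two_eq_zero]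

theorem vecMul_Mmat_one_one_zero (n : ℕ) (z r : F n) :
    ![1, 1, 0, z + 1] ᵥ* Mmat n r 0 (1 + r ^ (om n + 1)) =
      ![1, 1, 0, z * r ^ (om n + 1) + 1] := by
  rw [Mmat_zero_one_add]
  ext i
  fin_cases i <;> simp [vecMul, dotProduct, Fin.sum_univ_four] <;>
    ring_nf <;> simp [CharTwo.two_eq_zero]

def H2 (n : ℕ) : Set (Matrix (Fin 4) (Fin 4) (F n)) :=
  {A | ∃ r : F n, r ≠ 0 ∧ A = Mmat n r 0 (1 + r ^ (om n + 1))}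

theorem stab_eq_H2_of {n : ℕ} {v : Fin 4 → F n}
    (hstab : ∀ {r a b t : F n}, r ≠ 0 → v ᵥ* Mmat n r a b = t • v →
      a = 0 ∧ b = 1 + r ^ (om n + 1))
    (hH2 : ∀ r : F n, r ≠ 0 → ∃ t : F n, t ≠ 0 ∧ v ᵥ* Mmat n r 0 (1 + r ^ (om n + 1)) = t • v) :
    stab n v = H2 n := by
  ext A
  constructor
  · rintro ⟨⟨r, a, b, hr, rfl⟩, t, -, h⟩
    obtain ⟨rfl, rfl⟩ := hstab hr h
    exact ⟨r, hr, rfl⟩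
  · rintro ⟨r, hr, rfl⟩
    exact ⟨⟨r, 0, _, hr, rfl⟩, hH2 r hr⟩

theorem stab_0110_eq_H2 (n : ℕ) : stab n ![0, 1, 1, 0] = H2 n := by
  refine stab_eq_H2_of (fun {r a b t} hr h => ?_) (fun r hr => ⟨r, hr, ?_⟩)
  · rw [vecMul_Mmat] at h
    have h1 := congrFun h 1
    have h2 := congrFun h 2
    have h3 := congrFun h 3
    simp [hr] at h1 h2 h3
    subst h2
    refine ⟨h3.1, mul_right_cancel₀ hr ?_⟩
    rw [h3.1, zero_pow (Nat.succ_ne_zero _), zero_add] at h1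
    linear_combination h1 - r ^ (om n + 2) * CharTwo.two_eq_zero (R := F n)
  · rw [Mmat_zero_one_add]
    ext i
    fin_cases i <;> simp [vecMul, dotProduct, Fin.sum_univ_four]
    linear_combination r ^ (om n + 2) * CharTwo.two_eq_zero (R := F n)

theorem stab_1101_eq_H2 (n : ℕ) : stab n ![1, 1, 0, 1] = H2 n := by
  refine stab_eq_H2_of (fun {r a b t} hr h => ?_) (fun r _ => ⟨1, one_ne_zero, ?_⟩)
  · rw [vecMul_Mmat] at h
    have h0 := congrFun h 0
    have h2 := congrFun h 2
    have h3 := congrFun h 3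
    simp at h0 h2 h3
    subst h0
    exact ⟨h2, by linear_combination h3 - r ^ (om n + 1) * CharTwo.two_eq_zero (R := F n)⟩
  · simpa using vecMul_Mmat_one_one_zero n 0 r

theorem existsUnique_vecMul_Mmat_one_one_zero {n : ℕ} {z z' : F n} (hz : z ≠ 0) (hz' : z' ≠ 0) :
    ∃! r : F n, r ≠ 0 ∧ ∃ t : F n, t ≠ 0 ∧
      (![1, 1, 0, z + 1] : Fin 4 → F n) ᵥ* Mmat n r 0 (1 + r ^ (om n + 1)) =
        t • ![1, 1, 0, z' + 1] := by
  simp only [vecMul_Mmat_one_one_zero,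
    exists_smul_eq_iff_eq_of_apply_eq_one 0 (cons_val_zero _ _) (cons_val_zero _ _),
    vecCons_inj, add_left_inj, and_true, true_and]
  simp_rw [mul_comm z, ← eq_div_iff hz]
  exact existsUnique_pow_succ_eq (F.pow_om_sq n) (div_ne_zero hz' hz)

theorem existsUnique_vecMul_Mmat_one_add {n : ℕ} {z z' : F n} (hz : z ≠ 0) (hz' : z' ≠ 0) :
    ∃! r : F n, r ≠ 0 ∧ ∃ t : F n, t ≠ 0 ∧
      (![1, z + 1, z, 1] : Fin 4 → F n) ᵥ* Mmat n r 0 (1 + r ^ (om n + 1)) =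
        t • ![1, z' + 1, z', 1] := by
  simp only [vecMul_Mmat_one_add,
    exists_smul_eq_iff_eq_of_apply_eq_one 0 (cons_val_zero _ _) (cons_val_zero _ _),
    vecCons_inj, add_left_inj, and_true, true_and, and_self]
  simp_rw [mul_comm z, ← eq_div_iff hz]
  exact ⟨z' / z, ⟨div_ne_zero hz' hz, rfl⟩, fun r ⟨_, hr⟩ => hr⟩

theorem stabiliser_H2_general (n : ℕ) :
    stab n ![0, 1, 1, 0] = stab n ![1, 1, 0, 1] ∧
    stab n ![0, 1, 1, 0] =
      {A | ∃ r : F n, r ≠ 0 ∧ A = Mmat n r 0 (1 + r ^ (om n + 1))} ∧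
    (∀ r s : F n, r ≠ 0 → s ≠ 0 →
      Mmat n r 0 (1 + r ^ (om n + 1)) * Mmat n s 0 (1 + s ^ (om n + 1)) =
        Mmat n (r * s) 0 (1 + (r * s) ^ (om n + 1))) ∧
    (∀ r s : F n, r ≠ 0 → s ≠ 0 →
      Mmat n r 0 (1 + r ^ (om n + 1)) = Mmat n s 0 (1 + s ^ (om n + 1)) → r = s) ∧
    (∀ z r : F n, z ≠ 0 → r ≠ 0 → ∃ t : F n, t ≠ 0 ∧
      (![1, z + 1, z, 1] : Fin 4 → F n) ᵥ* Mmat n r 0 (1 + r ^ (om n + 1)) =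
        t • ![1, z * r + 1, z * r, 1]) ∧
    (∀ z z' : F n, z ≠ 0 → z' ≠ 0 → ∃! r : F n, r ≠ 0 ∧ ∃ t : F n, t ≠ 0 ∧
      (![1, 1, 0, z + 1] : Fin 4 → F n) ᵥ* Mmat n r 0 (1 + r ^ (om n + 1)) =
        t • ![1, 1, 0, z' + 1]) ∧
    (∀ z z' : F n, z ≠ 0 → z' ≠ 0 → ∃! r : F n, r ≠ 0 ∧ ∃ t : F n, t ≠ 0 ∧
      (![1, z + 1, z, 1] : Fin 4 → F n) ᵥ* Mmat n r 0 (1 + r ^ (om n + 1)) =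
        t • ![1, z' + 1, z', 1]) := by
  refine ⟨(stab_0110_eq_H2 n).trans (stab_1101_eq_H2 n).symm, stab_0110_eq_H2 n,
    fun r s _ _ => Mmat_mul_Mmat n r s, fun r s _ _ h => ?_,
    fun z r _ _ => ⟨1, one_ne_zero, by rw [vecMul_Mmat_one_add, one_smul]⟩,
    fun _ _ => existsUnique_vecMul_Mmat_one_one_zero, fun _ _ => existsUnique_vecMul_Mmat_one_add⟩
  simpa [Mmat] using congrFun (congrFun h 2) 2

theorem stabiliser_H2 (n : ℕ) (hn : 1 ≤ n) :
    stab n ![0, 1, 1, 0] = stab n ![1, 1, 0, 1] ∧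
    stab n ![0, 1, 1, 0] =
      {A | ∃ r : F n, r ≠ 0 ∧ A = Mmat n r 0 (1 + r ^ (om n + 1))} ∧
    (∀ r s : F n, r ≠ 0 → s ≠ 0 →
      Mmat n r 0 (1 + r ^ (om n + 1)) * Mmat n s 0 (1 + s ^ (om n + 1)) =
        Mmat n (r * s) 0 (1 + (r * s) ^ (om n + 1))) ∧
    (∀ r s : F n, r ≠ 0 → s ≠ 0 →
      Mmat n r 0 (1 + r ^ (om n + 1)) = Mmat n s 0 (1 + s ^ (om n + 1)) → r = s) ∧
    (∀ z r : F n, z ≠ 0 → r ≠ 0 → ∃ t : F n, t ≠ 0 ∧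
      (![1, z + 1, z, 1] : Fin 4 → F n) ᵥ* Mmat n r 0 (1 + r ^ (om n + 1)) =
        t • ![1, z * r + 1, z * r, 1]) ∧
    (∀ z z' : F n, z ≠ 0 → z' ≠ 0 → ∃! r : F n, r ≠ 0 ∧ ∃ t : F n, t ≠ 0 ∧
      (![1, 1, 0, z + 1] : Fin 4 → F n) ᵥ* Mmat n r 0 (1 + r ^ (om n + 1)) =
        t • ![1, 1, 0, z' + 1]) ∧
    (∀ z z' : F n, z ≠ 0 → z' ≠ 0 → ∃! r : F n, r ≠ 0 ∧ ∃ t : F n, t ≠ 0 ∧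
      (![1, z + 1, z, 1] : Fin 4 → F n) ᵥ* Mmat n r 0 (1 + r ^ (om n + 1)) =
        t • ![1, z' + 1, z', 1]) :=
  stabiliser_H2_general n
end
end
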